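/- arXiv:1109.3753 — 2 statements merged into one kernel-verified Lean document; each statement's English description precedes it below -/
import Mathlib

section
/- Define A(0,0)=4, A(0,1)=0, A(1,0)=5, A(1,1)=1, the quantum second-stage payoffs v₁(κ₁,κ₂) = (3/5)·A(κ₁,κ₂) + (2/5)·A(κ̄₁,κ̄₂) and v₂(κ₁,κ₂) = v₁(κ₂,κ₁) (κ̄ = 1−κ), and the twice-repeated game in which a strategy of player i is a pair (a, f) with a ∈ {0,1} and f : {0,1}×{0,1} → {0,1}, and total payoffs U₁((a,f),(b,g)) = A(a,b) + w₁^{(a,b)}(f(a,b), g(a,b)) and U₂((a,f),(b,g)) = A(b,a) + w₂^{(a,b)}(f(a,b), g(a,b)), where the second-stage payoff functions are w_i^{(0,0)} = v_i and, for (a,b) ≠ (0,0), w₁^{(a,b)}(x,y) = A(x,y) and w₂^{(a,b)}(x,y) = A(y,x). Then the profile in which both players choose a = 1 and f identically 1 is a pure Nash equilibrium of this twice-repeated game, with payoff 2 for each player. -/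
/-- Player 1's Prisoner's Dilemma payoffs `T = 5, R = 4, P = 1, S = 0`:
`A 0 0 = 4`, `A 0 1 = 0`, `A 1 0 = 5`, `A 1 1 = 1`. -/
noncomputable def A : Fin 2 → Fin 2 → ℝ := fun a b => !![4, 0; 5, 1] a b

/-- Player 1's second-stage payoff after the outcome `(0,0)`, the stage being
played on the entangled state `√(3/5)|00⟩ + √(2/5)|11⟩`. -/
noncomputable def v₁ (κ₁ κ₂ : Fin 2) : ℝ :=
  (3 / 5) * A κ₁ κ₂ + (2 / 5) * A (1 - κ₁) (1 - κ₂)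

/-- Player 2's second-stage payoff after the outcome `(0,0)`. -/
noncomputable def v₂ (κ₁ κ₂ : Fin 2) : ℝ := v₁ κ₂ κ₁

/-- A strategy in the twice-repeated game: a first-stage action together with a
second-stage action for each of the four possible first-stage outcomes. -/
abbrev RepStrategy := Fin 2 × (Fin 2 → Fin 2 → Fin 2)

/-- Player 1's total payoff: first-stage payoff plus the second-stage payoff,
where the second stage after outcome `(0,0)` is the quantum game `(v₁, v₂)` and
after every other outcome is the classical Prisoner's Dilemma. -/
noncomputable def totU₁ (s t : RepStrategy) : ℝ :=
  A s.1 t.1 + (if s.1 = 0 ∧ t.1 = 0 then v₁ (s.2 s.1 t.1) (t.2 s.1 t.1)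
    else A (s.2 s.1 t.1) (t.2 s.1 t.1))

/-- Player 2's total payoff. -/
noncomputable def totU₂ (s t : RepStrategy) : ℝ :=
  A t.1 s.1 + (if s.1 = 0 ∧ t.1 = 0 then v₂ (s.2 s.1 t.1) (t.2 s.1 t.1)
    else A (t.2 s.1 t.1) (s.2 s.1 t.1))

/-- A pure Nash equilibrium of the twice-repeated game. -/
def IsNashRep (W₁ W₂ : RepStrategy → RepStrategy → ℝ) (s t : RepStrategy) : Prop :=
  (∀ s' : RepStrategy, W₁ s' t ≤ W₁ s t) ∧ (∀ t' : RepStrategy, W₂ s t' ≤ W₂ s t)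

/-!
Against an opponent who defects in the first stage the outcome is never `(0,0)`, so the
entangled subgame is never reached and both stages are the classical Prisoner's Dilemma.
There a player facing defection earns at most `P = 1` per stage, which the all-defect
profile attains, so no deviation beats the total `2`.
-/

def allDefect : RepStrategy := (1, fun _ _ => 1)

lemma A_apply_one_le_one (a : Fin 2) : A a 1 ≤ 1 := by
  fin_cases a <;> norm_num [A]

lemma totU₁_allDefect_right (s : RepStrategy) :
    totU₁ s allDefect = A s.1 1 + A (s.2 s.1 1) 1 := by
  simp [totU₁, allDefect]

lemma totU₂_allDefect_left (t : RepStrategy) :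
    totU₂ allDefect t = A t.1 1 + A (t.2 1 t.1) 1 := by
  simp [totU₂, allDefect]

lemma totU₁_allDefect : totU₁ allDefect allDefect = 2 := by
  rw [totU₁_allDefect_right]
  norm_num [allDefect, A]

lemma totU₂_allDefect : totU₂ allDefect allDefect = 2 := by
  rw [totU₂_allDefect_left]
  norm_num [allDefect, A]

lemma totU₁_le_allDefect (s : RepStrategy) :
    totU₁ s allDefect ≤ totU₁ allDefect allDefect := by
  rw [totU₁_allDefect, totU₁_allDefect_right]
  linarith [A_apply_one_le_one s.1, A_apply_one_le_one (s.2 s.1 1)]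

lemma totU₂_le_allDefect (t : RepStrategy) :
    totU₂ allDefect t ≤ totU₂ allDefect allDefect := by
  rw [totU₂_allDefect, totU₂_allDefect_left]
  linarith [A_apply_one_le_one t.1, A_apply_one_le_one (t.2 1 t.1)]

/-- the all-defect profile (first-stage action `1`, second-stage
plan identically `1` for both players) is a pure Nash equilibrium of the quantum
twice-repeated Prisoner's Dilemma, with total payoff `2` for each player. -/
theorem stmt_14 :
    IsNashRep totU₁ totU₂ (1, fun _ _ => 1) (1, fun _ _ => 1)
      ∧ totU₁ (1, fun _ _ => 1) (1, fun _ _ => 1) = 2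
      ∧ totU₂ (1, fun _ _ => 1) (1, fun _ _ => 1) = 2 :=
  ⟨⟨totU₁_le_allDefect, totU₂_le_allDefect⟩, totU₁_allDefect, totU₂_allDefect⟩
end

section
/- Define A(0,0)=4, A(0,1)=0, A(1,0)=5, A(1,1)=1, the quantum second-stage payoffs v₁(κ₁,κ₂) = (3/5)·A(κ₁,κ₂) + (2/5)·A(κ̄₁,κ̄₂) and v₂(κ₁,κ₂) = v₁(κ₂,κ₁) (κ̄ = 1−κ), and the twice-repeated game in which a strategy of player i is a pair (a, f) with a ∈ {0,1} and f : {0,1}×{0,1} → {0,1}, and total payoffs U₁((a,f),(b,g)) = A(a,b) + w₁^{(a,b)}(f(a,b), g(a,b)) and U₂((a,f),(b,g)) = A(b,a) + w₂^{(a,b)}(f(a,b), g(a,b)), where w_i^{(0,0)} = v_i and, for (a,b) ≠ (0,0), w₁^{(a,b)}(x,y) = A(x,y) and w₂^{(a,b)}(x,y) = A(y,x). Then the profile in which both players choose a = 0 (cooperate at the first stage) and f identically 1 is a pure Nash equilibrium of this twice-repeated game, with payoff 31/5 = 6.2 for each player; in particular this equilibrium payoff strictly exceeds the payoff 2 of the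 all-defect equilibrium. -/
/-!
Entanglement raises the payoff of mutual defection after mutual cooperation from `P = 1` to
`v₁ 1 1 = 11/5`, while defection stays dominant in both second-stage games. So every continuation
is already a stage Nash equilibrium, and the only deviation left is the first-stage temptation
`T - R = 1`, which forfeits the bonus `11/5 - 1 = 6/5` that the entangled continuation pays.
-/

def cooperateThenDefect : RepStrategy := (0, fun _ _ => 1)

/-- Player 2's strategy read from her own seat: first-stage outcomes indexed with her action first. -/
def RepStrategy.transpose (s : RepStrategy) : RepStrategy := (s.1, fun a b => s.2 b a)

theorem totU₂_eq_totU₁_transpose (s t : RepStrategy) :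
    totU₂ s t = totU₁ t.transpose s.transpose := by
  simp only [totU₁, totU₂, v₂, RepStrategy.transpose, and_comm]

theorem A_le_A_one_one (x : Fin 2) : A x 1 ≤ A 1 1 := by
  fin_cases x <;> norm_num [A]

theorem v₁_le_v₁_one_one (x : Fin 2) : v₁ x 1 ≤ v₁ 1 1 := by
  fin_cases x <;> norm_num [v₁, A]

theorem totU₁_cooperateThenDefect_self :
    totU₁ cooperateThenDefect cooperateThenDefect = 31 / 5 := by
  norm_num [totU₁, cooperateThenDefect, v₁, A]

theorem totU₁_le_totU₁_cooperateThenDefect_self (s : RepStrategy) :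
    totU₁ s cooperateThenDefect ≤ totU₁ cooperateThenDefect cooperateThenDefect := by
  obtain ⟨a, f⟩ := s
  rw [totU₁_cooperateThenDefect_self]
  fin_cases a
  · have := v₁_le_v₁_one_one (f 0 0)
    norm_num [totU₁, cooperateThenDefect, v₁, A] at this ⊢
    linarith
  · have := A_le_A_one_one (f 1 0)
    norm_num [totU₁, cooperateThenDefect, A] at this ⊢
    linarith

/-- the profile in which both players cooperate (action `0`) at the
first stage and play `1` at the second stage after every outcome is a pure Nash
equilibrium of the quantum twice-repeated Prisoner's Dilemma, with total payoff
`31/5 = 6.2` for each player, which strictly exceeds the all-defect equilibrium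
payoff `2`. -/
theorem stmt_15 :
    IsNashRep totU₁ totU₂ (0, fun _ _ => 1) (0, fun _ _ => 1)
      ∧ totU₁ (0, fun _ _ => 1) (0, fun _ _ => 1) = 31 / 5
      ∧ totU₂ (0, fun _ _ => 1) (0, fun _ _ => 1) = 31 / 5
      ∧ (2 : ℝ) < 31 / 5 := by
  have hpay₂ : totU₂ cooperateThenDefect cooperateThenDefect = 31 / 5 :=
    (totU₂_eq_totU₁_transpose _ _).trans totU₁_cooperateThenDefect_self
  refine ⟨⟨fun s => ?_, fun t => ?_⟩, totU₁_cooperateThenDefect_self, hpay₂, by norm_num⟩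
  · exact totU₁_le_totU₁_cooperateThenDefect_self s
  · rw [totU₂_eq_totU₁_transpose, totU₂_eq_totU₁_transpose]
    exact totU₁_le_totU₁_cooperateThenDefect_self t.transpose
end
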